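/- Let λ ∈ ℂ \ {0} and f_λ(z) = λe^z. Fix q > 0 large. For every ε > 0 and all integers 0 ≤ k ≤ l, the set D_ε^{k,l} = {z ∈ I(f_λ) : Re(f_λⁿ(z)) > q for all n ≥ k, and |Im(f_λⁿ(z))| ≤ |f_λⁿ(z)|/(log |f_λⁿ(z)|)^ε for all n ≥ l} is contained in the fast escaping set A(f_λ). -/

import Mathlib

/-!
Put `A = ‖λ‖`. Since `M(r, f_λ) = A e^r` and `|f_λ(w)| = A e^{Re w}`, the fast escape of `z` amounts
to `Re f_λⁿ(z)` growing like `|f_λⁿ(z)|`. This is what the two conditions defining `D_ε^{k,l}` give: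
as `log |f_λⁿ(z)| → ∞`, eventually `|Im f_λⁿ(z)| ≤ |f_λⁿ(z)| / 4` and `Re f_λⁿ(z) > 0`, hence
`Re f_λⁿ(z) ≥ |f_λⁿ(z)| / 2 + 1`. Then `t ↦ A e^t` maps `|f_λⁿ(z)| / 2` below `|f_λⁿ⁺¹(z)| / 2`, so
by monotonicity the iterates `Mⁿ(R)` stay below `|f_λ^{n+L}(z)| / 2` from a suitable `L` on.
Taking `R ≥ max 1 (4 / A)` makes `A e^r ≥ r + 1` for `r ≥ R`, so that `Mⁿ(R) → ∞`.
-/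

open Filter Topology Metric MeasureTheory

/-- The exponential family `f_λ(z) = λ e^z`. -/
noncomputable def expFam (lam : ℂ) : ℂ → ℂ := fun z => lam * Complex.exp z

/-- The maximum modulus `M(r, f) = max_{|z| = r} |f(z)|`. -/
noncomputable def maxMod (f : ℂ → ℂ) (r : ℝ) : ℝ :=
  sSup ((fun z => ‖f z‖) '' Metric.sphere (0 : ℂ) r)

/-- The escaping set `I(f)`. -/
def escapingSet (f : ℂ → ℂ) : Set ℂ :=
  {z | Tendsto (fun n => ‖f^[n] z‖) atTop atTop}

/-- The fast escaping set `A(f)`. -/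
def fastEscapingSet (f : ℂ → ℂ) : Set ℂ :=
  {z | ∃ R : ℝ, 0 < R ∧ Tendsto (fun n => (maxMod f)^[n] R) atTop atTop ∧
    ∃ l : ℕ, ∀ n : ℕ, (maxMod f)^[n] R ≤ ‖f^[n + l] z‖}

lemma norm_expFam (lam w : ℂ) : ‖expFam lam w‖ = ‖lam‖ * Real.exp w.re := by
  rw [expFam, norm_mul, Complex.norm_exp]

lemma maxMod_expFam (lam : ℂ) {r : ℝ} (hr : 0 ≤ r) :
    maxMod (expFam lam) r = ‖lam‖ * Real.exp r := by
  refine IsGreatest.csSup_eq ⟨⟨r, by simp [abs_of_nonneg hr], by simp [norm_expFam]⟩, ?_⟩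
  rintro _ ⟨w, hw, rfl⟩
  have hre : w.re ≤ r := (Complex.re_le_norm w).trans (mem_sphere_zero_iff_norm.mp hw).le
  simp only [norm_expFam]
  gcongr

lemma iterate_maxMod_expFam (lam : ℂ) (n : ℕ) {R : ℝ} (hR : 0 ≤ R) :
    (maxMod (expFam lam))^[n] R = (fun r => ‖lam‖ * Real.exp r)^[n] R := by
  induction n generalizing R with
  | zero => rfl
  | succ n ih =>
    rw [Function.iterate_succ_apply, Function.iterate_succ_apply, maxMod_expFam lam hR, ih]
    positivity

lemma tendsto_iterate_atTop_of_add_one_le {g : ℝ → ℝ} {R : ℝ} (hg : ∀ r, R ≤ r → r + 1 ≤ g r) :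
    Tendsto (fun n => g^[n] R) atTop atTop := by
  have hlin : ∀ n : ℕ, R + n ≤ g^[n] R := by
    intro n
    induction n with
    | zero => simp
    | succ n ih =>
      rw [Function.iterate_succ_apply']
      push_cast
      linarith [hg _ (by linarith [n.cast_nonneg (α := ℝ)])]
  exact tendsto_atTop_mono hlin (tendsto_atTop_add_const_left _ R tendsto_natCast_atTop_atTop)

lemma add_one_le_mul_exp {A r : ℝ} (hr : 1 ≤ r) (hAr : 4 ≤ A * r) : r + 1 ≤ A * Real.exp r := by
  have hexp : r ^ 2 / 2 ≤ Real.exp r := by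
    linarith [Real.quadratic_le_exp_of_nonneg (by linarith : (0 : ℝ) ≤ r)]
  have hA : 0 ≤ A := by nlinarith
  nlinarith [mul_le_mul_of_nonneg_left hexp hA]

lemma two_mul_exp_half_norm_le_norm_expFam (lam : ℂ) {w : ℂ} (hw : ‖w‖ / 2 + 1 ≤ w.re) :
    2 * (‖lam‖ * Real.exp (‖w‖ / 2)) ≤ ‖expFam lam w‖ := by
  have htwo : 2 ≤ Real.exp 1 := by linarith [Real.add_one_le_exp 1]
  calc 2 * (‖lam‖ * Real.exp (‖w‖ / 2))
      ≤ Real.exp 1 * (‖lam‖ * Real.exp (‖w‖ / 2)) := by gcongr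
    _ = ‖lam‖ * Real.exp (‖w‖ / 2 + 1) := by rw [Real.exp_add]; ring
    _ ≤ ‖expFam lam w‖ := by rw [norm_expFam]; gcongr

lemma eventually_half_norm_add_one_le_re {w : ℕ → ℂ} {ε : ℝ} (hε : 0 < ε)
    (hw : Tendsto (fun n => ‖w n‖) atTop atTop) (hre : ∀ᶠ n in atTop, 0 ≤ (w n).re)
    (him : ∀ᶠ n in atTop, |(w n).im| ≤ ‖w n‖ / Real.log ‖w n‖ ^ ε) :
    ∀ᶠ n in atTop, ‖w n‖ / 2 + 1 ≤ (w n).re := by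
  have hlog : ∀ᶠ n in atTop, 4 ≤ Real.log ‖w n‖ ^ ε :=
    ((tendsto_rpow_atTop hε).comp (Real.tendsto_log_atTop.comp hw)).eventually_ge_atTop 4
  filter_upwards [hw.eventually_ge_atTop 4, hlog, hre, him] with n hnorm hlog hre him
  have him4 : |(w n).im| ≤ ‖w n‖ / 4 :=
    him.trans (div_le_div_of_nonneg_left (by linarith) (by norm_num) hlog)
  linarith [Complex.norm_le_abs_re_add_abs_im (w n), abs_of_nonneg hre]

theorem karpinska_urbanski_sets_subset_fastEscaping (lam : ℂ) (hlam : lam ≠ 0) :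
    ∃ q₀ : ℝ, 0 < q₀ ∧ ∀ q : ℝ, q₀ ≤ q → ∀ ε : ℝ, 0 < ε → ∀ k l : ℕ, k ≤ l →
      {z : ℂ | z ∈ escapingSet (expFam lam) ∧
        (∀ n, k ≤ n → q < ((expFam lam)^[n] z).re) ∧
        (∀ n, l ≤ n → |((expFam lam)^[n] z).im| ≤
          ‖(expFam lam)^[n] z‖ /
            (Real.log (‖(expFam lam)^[n] z‖)) ^ ε)} ⊆
      fastEscapingSet (expFam lam) := by
  refine ⟨1, one_pos, fun q hq ε hε k l _ z ⟨hz, hre, him⟩ => ?_⟩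
  have hA : 0 < ‖lam‖ := norm_pos_iff.mpr hlam
  set g : ℝ → ℝ := fun r => ‖lam‖ * Real.exp r
  have hg : Monotone g := Real.exp_monotone.const_mul hA.le
  set R := max 1 (4 / ‖lam‖)
  have hR : 0 ≤ R := zero_le_one.trans (le_max_left _ _)
  have hsector := eventually_half_norm_add_one_le_re hε hz
    (eventually_atTop.mpr ⟨k, fun n hn => by linarith [hre n hn]⟩) (eventually_atTop.mpr ⟨l, him⟩)
  obtain ⟨L, hL⟩ := eventually_atTop.mp (hsector.and (hz.eventually_ge_atTop (2 * R)))
  have hcmp (n : ℕ) : g^[n] R ≤ ‖(expFam lam)^[n + L] z‖ / 2 := by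
    refine hg.seq_le_seq (x := fun n => g^[n] R) (y := fun n => ‖(expFam lam)^[n + L] z‖ / 2) n ?_
      (fun _ _ => (Function.iterate_succ_apply' _ _ _).le) fun m _ => ?_
    · simp only [Function.iterate_zero_apply, zero_add]
      linarith [(hL L le_rfl).2]
    · rw [Nat.add_right_comm, Function.iterate_succ_apply']
      linarith [two_mul_exp_half_norm_le_norm_expFam lam (hL (m + L) (by omega)).1]
  refine ⟨R, by positivity, ?_, L, fun n => ?_⟩
  · simp_rw [iterate_maxMod_expFam lam _ hR]
    refine tendsto_iterate_atTop_of_add_one_le fun r hr => add_one_le_mul_exp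
      ((le_max_left _ _).trans hr) ?_
    rw [← div_le_iff₀' hA]
    exact (le_max_right _ _).trans hr
  · rw [iterate_maxMod_expFam lam _ hR]
    linarith [hcmp n, norm_nonneg ((expFam lam)^[n + L] z)]
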